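/- Consider the linearly constrained problem: minimize Σ_{i=1}^N f_i(x_i) subject to x_i ∈ X_i and Σ_{i=1}^N A_i x_i = b, with Lagrangian L(x, λ) = Σ_i f_i(x_i) + λᵀ(Σ_i A_i x_i − b). Let (x*, λ*) be a saddle point of L (so in particular Σ_i A_i x*_i = b). Let λ⁰ ∈ ℝ^m, ρ > 0, K ≥ 1 an integer, and let x̄_i ∈ X_i be points such that for every λ ∈ ℝ^m: Σ_i f_i(x̄_i) − Σ_i f_i(x*_i) + λᵀ(Σ_i A_i x̄_i − b) ≤ ‖λ⁰ − λ‖₂²/(2ρK). Then, with C₁ = (1/(2ρ))·(‖λ⁰ − λ*‖₂ + 1)² and C₂ = ‖λ⁰ − λ*‖₂²/(2ρ), it holds that ‖Σ_i A_i x̄_i − b‖₂ ≤ C₁/K and |Σ_i f_i(x̄_i) − Σ_i f_i(x*_i)| ≤ (‖λ*‖₂·C₁ + C₂)/K. -/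

import Mathlib

open scoped BigOperators

/-- The Lagrangian of the linearly constrained problem:
`L(x, λ) = Σᵢ fᵢ(xᵢ) + λᵀ(Σᵢ Aᵢ xᵢ − b)`. -/
noncomputable def lagrangianLin {N m : ℕ} {n : Fin N → ℕ}
    (f : ∀ i, EuclideanSpace ℝ (Fin (n i)) → ℝ)
    (A : ∀ i, EuclideanSpace ℝ (Fin (n i)) →L[ℝ] EuclideanSpace ℝ (Fin m))
    (b : EuclideanSpace ℝ (Fin m))
    (x : ∀ i, EuclideanSpace ℝ (Fin (n i)))
    (lam : EuclideanSpace ℝ (Fin m)) : ℝ :=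
  (∑ i, f i (x i)) + (inner ℝ lam ((∑ i, A i (x i)) - b) : ℝ)

/-!
The `λ`-half of the saddle inequality forces `Σᵢ Aᵢ x*ᵢ = b`, and its `x`-half evaluated at
`x̄` gives `0 ≤ Δ + ⟪λ*, r⟫`, where `Δ` is the objective gap and `r = Σᵢ Aᵢ x̄ᵢ − b`.
Testing the hypothesis on `x̄` at `λ = λ* + r/‖r‖` then bounds `‖r‖`, and testing it at
`λ = λ*` together with Cauchy–Schwarz bounds `|Δ|`.
-/

open scoped RealInnerProductSpace

section InnerProductSpace

variable {E : Type*} [NormedAddCommGroup E] [InnerProductSpace ℝ E]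

lemma eq_zero_of_forall_inner_le {v z : E} (h : ∀ y, ⟪y, v⟫ ≤ ⟪z, v⟫) : v = 0 := by
  have hvv : ⟪v, v⟫ ≤ 0 := by
    have := h (z + v)
    rw [inner_add_left] at this
    linarith
  exact inner_self_eq_zero.1 (le_antisymm hvv real_inner_self_nonneg)

variable {Δ c : ℝ} {r l₀ l : E}

lemma norm_le_of_forall_add_inner_le (hc : 0 ≤ c) (hlow : 0 ≤ Δ + ⟪l, r⟫)
    (hup : ∀ y, Δ + ⟪y, r⟫ ≤ c * ‖l₀ - y‖ ^ 2) :
    ‖r‖ ≤ c * (‖l₀ - l‖ + 1) ^ 2 := by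
  set u : E := ‖r‖⁻¹ • r
  -- `u = r / ‖r‖`, which is also correct (as `0`) when `r = 0`
  have hur : ⟪u, r⟫ = ‖r‖ := by
    rw [real_inner_smul_left, real_inner_self_eq_norm_sq, sq, ← mul_assoc]
    rcases eq_or_ne ‖r‖ 0 with h | h
    · simp [h]
    · rw [inv_mul_cancel₀ h, one_mul]
  have hu : ‖u‖ ≤ 1 := by
    rw [norm_smul, norm_inv, norm_norm]
    exact inv_mul_le_one
  have hdist : ‖l₀ - (l + u)‖ ≤ ‖l₀ - l‖ + 1 :=
    calc ‖l₀ - (l + u)‖ = ‖(l₀ - l) - u‖ := by rw [sub_add_eq_sub_sub]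
      _ ≤ ‖l₀ - l‖ + ‖u‖ := norm_sub_le _ _
      _ ≤ ‖l₀ - l‖ + 1 := by gcongr
  have hsq : c * ‖l₀ - (l + u)‖ ^ 2 ≤ c * (‖l₀ - l‖ + 1) ^ 2 := by gcongr
  have hup_u := hup (l + u)
  rw [inner_add_left, hur] at hup_u
  linarith

lemma abs_le_of_forall_add_inner_le (hc : 0 ≤ c) (hlow : 0 ≤ Δ + ⟪l, r⟫)
    (hup : ∀ y, Δ + ⟪y, r⟫ ≤ c * ‖l₀ - y‖ ^ 2) :
    |Δ| ≤ ‖l‖ * (c * (‖l₀ - l‖ + 1) ^ 2) + c * ‖l₀ - l‖ ^ 2 := by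
  have hr : ‖l‖ * ‖r‖ ≤ ‖l‖ * (c * (‖l₀ - l‖ + 1) ^ 2) :=
    mul_le_mul_of_nonneg_left (norm_le_of_forall_add_inner_le hc hlow hup) (norm_nonneg l)
  have hcs := abs_le.1 (abs_real_inner_le_norm l r)
  have hup_l := hup l
  have hc_sq : 0 ≤ c * ‖l₀ - l‖ ^ 2 := by positivity
  rw [abs_le]
  constructor <;> linarith

end InnerProductSpace

section Lagrangian

variable {N m : ℕ} {n : Fin N → ℕ}
  {f : ∀ i, EuclideanSpace ℝ (Fin (n i)) → ℝ}
  {A : ∀ i, EuclideanSpace ℝ (Fin (n i)) →L[ℝ] EuclideanSpace ℝ (Fin m)}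
  {b : EuclideanSpace ℝ (Fin m)} {x : ∀ i, EuclideanSpace ℝ (Fin (n i))}

lemma residual_eq_zero_of_forall_lagrangianLin_le {l : EuclideanSpace ℝ (Fin m)}
    (h : ∀ y, lagrangianLin f A b x y ≤ lagrangianLin f A b x l) :
    (∑ i, A i (x i)) - b = 0 :=
  eq_zero_of_forall_inner_le fun y => by simpa [lagrangianLin] using h y

lemma lagrangianLin_of_residual_eq_zero (hx : (∑ i, A i (x i)) - b = 0)
    (l : EuclideanSpace ℝ (Fin m)) : lagrangianLin f A b x l = ∑ i, f i (x i) := by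
  simp [lagrangianLin, hx]

end Lagrangian

theorem stmt_13_general {N m : ℕ} {n : Fin N → ℕ}
    (f : ∀ i, EuclideanSpace ℝ (Fin (n i)) → ℝ)
    (A : ∀ i, EuclideanSpace ℝ (Fin (n i)) →L[ℝ] EuclideanSpace ℝ (Fin m))
    (b : EuclideanSpace ℝ (Fin m))
    (X : ∀ i, Set (EuclideanSpace ℝ (Fin (n i))))
    (xs : ∀ i, EuclideanSpace ℝ (Fin (n i))) (ls : EuclideanSpace ℝ (Fin m))
    (hsaddle1 : ∀ lam : EuclideanSpace ℝ (Fin m),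
      lagrangianLin f A b xs lam ≤ lagrangianLin f A b xs ls)
    (hsaddle2 : ∀ x : ∀ i, EuclideanSpace ℝ (Fin (n i)), (∀ i, x i ∈ X i) →
      lagrangianLin f A b xs ls ≤ lagrangianLin f A b x ls)
    (lam0 : EuclideanSpace ℝ (Fin m)) (ρ : ℝ) (hρ : 0 < ρ) (K : ℕ)
    (xbar : ∀ i, EuclideanSpace ℝ (Fin (n i))) (hxbarmem : ∀ i, xbar i ∈ X i)
    (hxbar : ∀ lam : EuclideanSpace ℝ (Fin m),
      (∑ i, f i (xbar i)) - (∑ i, f i (xs i))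
          + (inner ℝ lam ((∑ i, A i (xbar i)) - b) : ℝ)
        ≤ ‖lam0 - lam‖ ^ 2 / (2 * ρ * K)) :
    ‖(∑ i, A i (xbar i)) - b‖ ≤ (1 / (2 * ρ) * (‖lam0 - ls‖ + 1) ^ 2) / K ∧
    |(∑ i, f i (xbar i)) - ∑ i, f i (xs i)|
      ≤ (‖ls‖ * (1 / (2 * ρ) * (‖lam0 - ls‖ + 1) ^ 2) + ‖lam0 - ls‖ ^ 2 / (2 * ρ)) / K := by
  have hlow : 0 ≤ (∑ i, f i (xbar i)) - (∑ i, f i (xs i))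
      + ⟪ls, (∑ i, A i (xbar i)) - b⟫ := by
    have h := hsaddle2 xbar hxbarmem
    rw [lagrangianLin_of_residual_eq_zero (residual_eq_zero_of_forall_lagrangianLin_le hsaddle1),
      lagrangianLin] at h
    linarith
  have hup : ∀ lam, (∑ i, f i (xbar i)) - (∑ i, f i (xs i))
      + ⟪lam, (∑ i, A i (xbar i)) - b⟫ ≤ (2 * ρ * K)⁻¹ * ‖lam0 - lam‖ ^ 2 :=
    fun lam => (hxbar lam).trans_eq (div_eq_inv_mul _ _)
  have hc : 0 ≤ (2 * ρ * K)⁻¹ := by positivity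
  constructor
  · convert norm_le_of_forall_add_inner_le hc hlow hup using 1
    ring
  · convert abs_le_of_forall_add_inner_le hc hlow hup using 1
    ring

/-- from the averaged saddle-type bound to the sublinear rates on the
objective gap and the feasibility residual. -/
theorem stmt_13 {N m : ℕ} {n : Fin N → ℕ}
    (f : ∀ i, EuclideanSpace ℝ (Fin (n i)) → ℝ)
    (A : ∀ i, EuclideanSpace ℝ (Fin (n i)) →L[ℝ] EuclideanSpace ℝ (Fin m))
    (b : EuclideanSpace ℝ (Fin m))
    (X : ∀ i, Set (EuclideanSpace ℝ (Fin (n i))))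
    (hX : ∀ i, IsClosed (X i) ∧ Convex ℝ (X i))
    (hf : ∀ i, Continuous (f i) ∧ ConvexOn ℝ Set.univ (f i))
    (xs : ∀ i, EuclideanSpace ℝ (Fin (n i))) (ls : EuclideanSpace ℝ (Fin m))
    (hxs : ∀ i, xs i ∈ X i)
    (hsaddle1 : ∀ lam : EuclideanSpace ℝ (Fin m),
      lagrangianLin f A b xs lam ≤ lagrangianLin f A b xs ls)
    (hsaddle2 : ∀ x : ∀ i, EuclideanSpace ℝ (Fin (n i)), (∀ i, x i ∈ X i) →
      lagrangianLin f A b xs ls ≤ lagrangianLin f A b x ls)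
    (lam0 : EuclideanSpace ℝ (Fin m)) (ρ : ℝ) (hρ : 0 < ρ) (K : ℕ) (hK : 1 ≤ K)
    (xbar : ∀ i, EuclideanSpace ℝ (Fin (n i))) (hxbarmem : ∀ i, xbar i ∈ X i)
    (hxbar : ∀ lam : EuclideanSpace ℝ (Fin m),
      (∑ i, f i (xbar i)) - (∑ i, f i (xs i))
          + (inner ℝ lam ((∑ i, A i (xbar i)) - b) : ℝ)
        ≤ ‖lam0 - lam‖ ^ 2 / (2 * ρ * K)) :
    ‖(∑ i, A i (xbar i)) - b‖ ≤ (1 / (2 * ρ) * (‖lam0 - ls‖ + 1) ^ 2) / K ∧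
    |(∑ i, f i (xbar i)) - ∑ i, f i (xs i)|
      ≤ (‖ls‖ * (1 / (2 * ρ) * (‖lam0 - ls‖ + 1) ^ 2) + ‖lam0 - ls‖ ^ 2 / (2 * ρ)) / K :=
  stmt_13_general f A b X xs ls hsaddle1 hsaddle2 lam0 ρ hρ K xbar hxbarmem hxbar
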